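/- arXiv:2007.16087 — 3 statements merged into one kernel-verified Lean document; each statement's English description precedes it below -/
import Mathlib

section
/- With the notation of the previous statement (harmonic noise memory kernel with parameters γ, ν fixed and α > 2), for every fixed t > 0 the memory kernel γ_α(t) converges to (γ/ν²) e^{−t/ν²} as α → ∞. -/
/-!
Writing `s = √(α² - 4)` and splitting `sinh` and `cosh` into exponentials, the kernel becomes
`(α/s + 1)/2 · exp((αs - α²)c/2) + (1 - α/s)/2 · exp(-(αs + α²)c/2)` with `c = t/ν²`.
Since `α/s → 1` and `α² - αs = 4/(1 + s/α) → 2`, the first term tends to `e^{-c}`, while the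
second is a vanishing coefficient times an exponential bounded by `1`.
-/

open Filter Real Topology

lemma exp_mul_mul_sinh_add_cosh (a r u : ℝ) :
    exp a * (r * sinh u + cosh u) = (r + 1) / 2 * exp (a + u) + (1 - r) / 2 * exp (a - u) := by
  rw [sinh_eq, cosh_eq, sub_eq_add_neg a u, exp_add, exp_add]
  ring

lemma tendsto_div_sqrt_sq_sub_four :
    Tendsto (fun α : ℝ => α / √(α ^ 2 - 4)) atTop (𝓝 1) := by
  have hquad : Tendsto (fun α : ℝ => α ^ 2 - 4) atTop atTop :=
    tendsto_atTop_add_const_right _ _ (tendsto_pow_atTop two_ne_zero)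
  have hsqrt : Tendsto (fun α : ℝ => √(1 + 4 / (α ^ 2 - 4))) atTop (𝓝 1) := by
    simpa using ((tendsto_const_nhds.div_atTop hquad).const_add 1).sqrt
  refine hsqrt.congr' ?_
  filter_upwards [eventually_gt_atTop 2] with α hα
  have hd : 0 < α ^ 2 - 4 := by nlinarith
  rw [show 1 + 4 / (α ^ 2 - 4) = α ^ 2 / (α ^ 2 - 4) by field_simp; ring,
    sqrt_div' _ hd.le, sqrt_sq (by linarith)]

lemma tendsto_mul_sqrt_sq_sub_four_sub_sq :
    Tendsto (fun α : ℝ => α * √(α ^ 2 - 4) - α ^ 2) atTop (𝓝 (-2)) := by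
  have hden : Tendsto (fun α : ℝ => 1 + √(α ^ 2 - 4) / α) atTop (𝓝 2) := by
    simpa [inv_div, one_add_one_eq_two] using
      (tendsto_div_sqrt_sq_sub_four.inv₀ one_ne_zero).const_add (1 : ℝ)
  have hlim : Tendsto (fun α : ℝ => -4 / (1 + √(α ^ 2 - 4) / α)) atTop (𝓝 (-4 / 2)) :=
    tendsto_const_nhds.div hden two_ne_zero
  rw [show (-4 : ℝ) / 2 = -2 by norm_num] at hlim
  refine hlim.congr' ?_
  filter_upwards [eventually_gt_atTop 2] with α hα
  have hd : 0 < α ^ 2 - 4 := by nlinarith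
  have hα0 : 0 < α := by linarith
  have hs2 : √(α ^ 2 - 4) ^ 2 = α ^ 2 - 4 := sq_sqrt hd.le
  rw [div_eq_iff (by positivity)]
  field_simp
  linear_combination -hs2

lemma tendsto_harmonic_kernel {c : ℝ} (hc : 0 ≤ c) :
    Tendsto (fun α : ℝ => exp (-(α ^ 2 * c) / 2) *
        (α / √(α ^ 2 - 4) * sinh (√(α ^ 2 - 4) / 2 * (α * c)) +
          cosh (√(α ^ 2 - 4) / 2 * (α * c))))
      atTop (𝓝 (exp (-c))) := by
  have hratio := tendsto_div_sqrt_sq_sub_four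
  have hmain : Tendsto (fun α : ℝ => exp ((α * √(α ^ 2 - 4) - α ^ 2) * c / 2))
      atTop (𝓝 (exp (-c))) := by
    have := ((tendsto_mul_sqrt_sq_sub_four_sub_sq.mul_const c).div_const 2).rexp
    rwa [show -2 * c / 2 = -c by ring] at this
  have hcoef : Tendsto (fun α : ℝ => (α / √(α ^ 2 - 4) + 1) / 2) atTop (𝓝 1) := by
    simpa using (hratio.add_const 1).div_const 2
  have hcoef' : Tendsto (fun α : ℝ => (1 - α / √(α ^ 2 - 4)) / 2) atTop (𝓝 0) := by
    simpa using (hratio.const_sub 1).div_const 2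
  have hbounded : IsBoundedUnder (· ≤ ·) atTop
      (fun α : ℝ => ‖exp (-(α * √(α ^ 2 - 4) + α ^ 2) * c / 2)‖) := by
    refine isBoundedUnder_of_eventually_le (a := 1) ?_
    filter_upwards [eventually_ge_atTop 0] with α hα
    rw [norm_of_nonneg (exp_nonneg _), exp_le_one_iff]
    have hprod : 0 ≤ (α * √(α ^ 2 - 4) + α ^ 2) * c := mul_nonneg (by positivity) hc
    linarith
  have hsum := (hcoef.mul hmain).add (hcoef'.zero_mul_isBoundedUnder_le hbounded)
  rw [one_mul, add_zero] at hsum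
  refine hsum.congr fun α => ?_
  rw [exp_mul_mul_sinh_add_cosh]
  ring_nf

theorem harmonic_kernel_limit_general (γ ν t : ℝ) (ht : 0 < t) :
    Filter.Tendsto
      (fun α : ℝ =>
        γ / ν ^ 2 * Real.exp (-(α ^ 2 * t) / (2 * ν ^ 2)) *
          (α / Real.sqrt (α ^ 2 - 4) *
              Real.sinh (Real.sqrt (α ^ 2 - 4) / 2 * (α * t / ν ^ 2)) +
            Real.cosh (Real.sqrt (α ^ 2 - 4) / 2 * (α * t / ν ^ 2))))
      Filter.atTop (nhds (γ / ν ^ 2 * Real.exp (-t / ν ^ 2))) := by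
  have hkernel := tendsto_harmonic_kernel (div_nonneg ht.le (sq_nonneg ν))
  rw [← neg_div] at hkernel
  refine (hkernel.const_mul (γ / ν ^ 2)).congr fun α => ?_
  rw [mul_div_assoc, mul_assoc, show -(α ^ 2 * t) / (2 * ν ^ 2) = -(α ^ 2 * (t / ν ^ 2)) / 2 by ring]

/-- The harmonic-noise memory kernel (with `α > 2`) converges pointwise, as
`α → ∞`, to the Ornstein–Uhlenbeck memory kernel `(γ/ν²) e^{-t/ν²}`. -/
theorem harmonic_kernel_limit (γ ν t : ℝ) (hγ : 0 < γ) (hν : 0 < ν) (ht : 0 < t) :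
    Filter.Tendsto
      (fun α : ℝ =>
        γ / ν ^ 2 * Real.exp (-(α ^ 2 * t) / (2 * ν ^ 2)) *
          (α / Real.sqrt (α ^ 2 - 4) *
              Real.sinh (Real.sqrt (α ^ 2 - 4) / 2 * (α * t / ν ^ 2)) +
            Real.cosh (Real.sqrt (α ^ 2 - 4) / 2 * (α * t / ν ^ 2))))
      Filter.atTop (nhds (γ / ν ^ 2 * Real.exp (-t / ν ^ 2))) :=
  harmonic_kernel_limit_general γ ν t ht
end

section
/- Let X ∈ ℝ^{d×d} have nonpositive off-diagonal entries. Then λ⁺_min(X) := min_{v≠0, v≥0} vᵀXv/vᵀv equals the smallest eigenvalue of the symmetrized matrix (X + Xᵀ)/2. -/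
/-!
The symmetrization `S = (X + Xᵀ)/2` has the same quadratic form as `X`, so every Rayleigh
quotient of `X` is at least the smallest eigenvalue `μ` of `S`. Conversely, if `w` is an
eigenvector of `S` for `μ`, then `|w|` is nonnegative, and because the off-diagonal entries
of `X` are nonpositive, `|w|ᵀ X |w| ≤ wᵀ X w = μ ‖w‖² = μ ‖|w|‖²`; so the infimum is attained.
-/

open Matrix

namespace Matrix

variable {n R : Type*} [Fintype n]

lemma dotProduct_half_smul_add_transpose_mulVec [Field R] [NeZero (2 : R)]
    (X : Matrix n n R) (v : n → R) :
    v ⬝ᵥ ((1 / 2 : R) • (X + Xᵀ)) *ᵥ v = v ⬝ᵥ X *ᵥ v := by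
  rw [smul_mulVec, dotProduct_smul, add_mulVec, dotProduct_add, dotProduct_transpose_mulVec,
    smul_eq_mul, ← two_mul, one_div, inv_mul_cancel_left₀ two_ne_zero]

lemma dotProduct_abs_self [Ring R] [LinearOrder R] [IsStrictOrderedRing R] (v : n → R) :
    |v| ⬝ᵥ |v| = v ⬝ᵥ v :=
  Finset.sum_congr rfl fun i _ ↦ abs_mul_abs_self (v i)

lemma dotProduct_self_pos [Ring R] [LinearOrder R] [IsStrictOrderedRing R] {v : n → R}
    (hv : v ≠ 0) : 0 < v ⬝ᵥ v :=
  (Finset.sum_nonneg fun i _ ↦ mul_self_nonneg (v i)).lt_of_ne'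
    (dotProduct_self_eq_zero.not.mpr hv)

lemma abs_dotProduct_mulVec_abs_le [CommRing R] [LinearOrder R] [IsStrictOrderedRing R]
    {X : Matrix n n R} (hX : ∀ i j, i ≠ j → X i j ≤ 0) (v : n → R) :
    |v| ⬝ᵥ X *ᵥ |v| ≤ v ⬝ᵥ X *ᵥ v := by
  simp only [dot_mulVec_eq_sum_sum, Pi.abs_apply]
  refine Finset.sum_le_sum fun j _ ↦ Finset.sum_le_sum fun i _ ↦ ?_
  rcases eq_or_ne i j with rfl | hij
  · rw [mul_right_comm, abs_mul_abs_self, mul_right_comm]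
  · rw [mul_right_comm, mul_right_comm (v i), ← abs_mul]
    exact mul_le_mul_of_nonpos_right (le_abs_self _) (hX i j hij)

namespace IsHermitian

open scoped MatrixOrder

variable [DecidableEq n] {S : Matrix n n ℝ}

lemma iInf_eigenvalues_mul_dotProduct_self_le (hS : S.IsHermitian) (v : n → ℝ) :
    (⨅ i, hS.eigenvalues i) * (v ⬝ᵥ v) ≤ v ⬝ᵥ S *ᵥ v := by
  have hle : algebraMap ℝ (Matrix n n ℝ) (⨅ i, hS.eigenvalues i) ≤ S := by
    refine (algebraMap_le_iff_le_spectrum hS.isSelfAdjoint).mpr ?_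
    rw [hS.spectrum_real_eq_range_eigenvalues]
    rintro _ ⟨i, rfl⟩
    exact ciInf_le (Finite.bddBelow_range _) i
  simpa [Algebra.algebraMap_eq_smul_one, sub_mulVec, smul_mulVec, dotProduct_sub] using
    (le_iff.mp hle).dotProduct_mulVec_nonneg v

lemma exists_mulVec_eq_iInf_eigenvalues_smul [Nonempty n] (hS : S.IsHermitian) :
    ∃ w ≠ 0, S *ᵥ w = (⨅ i, hS.eigenvalues i) • w := by
  obtain ⟨i, hi⟩ := exists_eq_ciInf_of_finite (f := hS.eigenvalues)
  exact ⟨_, (WithLp.ofLp_eq_zero 2).not.mpr (hS.eigenvectorBasis.orthonormal.ne_zero i),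
    hi ▸ hS.mulVec_eigenvectorBasis i⟩

end IsHermitian

end Matrix

/-- For a real matrix `X` with nonpositive off-diagonal entries, the minimum of
the Rayleigh quotient over nonzero nonnegative vectors equals the smallest
eigenvalue of the symmetrized matrix `(X + Xᵀ)/2`. -/
theorem lambda_min_plus_eq_min_eigenvalue {d : ℕ} (hd : 0 < d)
    (X : Matrix (Fin d) (Fin d) ℝ) (hoff : ∀ i j, i ≠ j → X i j ≤ 0)
    (hS : ((1 / 2 : ℝ) • (X + Xᵀ)).IsHermitian) :
    sInf {r : ℝ | ∃ v : Fin d → ℝ, v ≠ 0 ∧ (∀ i, 0 ≤ v i) ∧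
        r = v ⬝ᵥ X.mulVec v / (v ⬝ᵥ v)} = ⨅ i, hS.eigenvalues i := by
  have : Nonempty (Fin d) := ⟨⟨0, hd⟩⟩
  have le_rayleigh (v : Fin d → ℝ) (hv : v ≠ 0) :
      (⨅ i, hS.eigenvalues i) ≤ v ⬝ᵥ X *ᵥ v / (v ⬝ᵥ v) := by
    rw [le_div_iff₀ (dotProduct_self_pos hv), ← dotProduct_half_smul_add_transpose_mulVec]
    exact hS.iInf_eigenvalues_mul_dotProduct_self_le v
  refine IsLeast.csInf_eq ⟨?_, fun r ⟨v, hv, _, hr⟩ ↦ hr ▸ le_rayleigh v hv⟩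
  obtain ⟨w, hw, hSw⟩ := hS.exists_mulVec_eq_iInf_eigenvalues_smul
  have habs : |w| ≠ 0 := by simpa using hw
  refine ⟨|w|, habs, fun i ↦ abs_nonneg (w i), (le_rayleigh |w| habs).antisymm ?_⟩
  rw [div_le_iff₀ (dotProduct_self_pos habs), dotProduct_abs_self]
  calc |w| ⬝ᵥ X *ᵥ |w| ≤ w ⬝ᵥ X *ᵥ w := abs_dotProduct_mulVec_abs_le hoff w
    _ = w ⬝ᵥ ((1 / 2 : ℝ) • (X + Xᵀ)) *ᵥ w :=
      (dotProduct_half_smul_add_transpose_mulVec X w).symm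
    _ = (⨅ i, hS.eigenvalues i) * (w ⬝ᵥ w) := by rw [hSw, dotProduct_smul, smul_eq_mul]
end

section
/- Fix k > 0 and ν > 0. For the cubic polynomial p(x) = x³ + ν⁻²x² + (γν⁻² + k)x + kν⁻² viewed as a function of x with parameter γ, the real root x₁(γ) satisfies x₁(γ) = −ν⁻² + O(γ) and the two complex conjugate roots x_{2,3}(γ) satisfy x₂(γ) = i√k − γ(1 − i√k ν²)/(2(1 + kν⁴)) + O(γ²) as γ → 0. -/
/-!
With `a = ν⁻²` the cubic is `x³ + a x² + (γa + k) x + ka`. It equals `-γa² ≤ 0` at `-a` and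
`ka > 0` at `0`, so it has a real root `x₁ ∈ [-a, 0]`. The shift `e = x₁ + a` solves
`e ((a - e)² + k) = γ a (a - e)`, hence `0 ≤ e ≤ γa²/k`, and `e = γ h(e)` for the smooth function
`h(u) = a(a - u)/((a - u)² + k)`, so `e - γ h(0) = γ (h(e) - h(0)) = O(γ²)`.
Dividing out `x - x₁` leaves `x² + e x + (γa + k + (e - a) e)`, with roots `-e/2 ± i √R`
for `R = k + γa - ae + 3e²/4 → k`; then `√R - √k (1 + γa/(2(a² + k)))` is bounded by
`(R - k (1 + γa/(2(a² + k)))²)/√k`, which is `O(γ²)` by the expansion of `e`.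
-/

open Asymptotics Filter Topology Set

theorem Complex.mk_sq_add_mul_add_eq_zero {u v s : ℝ} (hs : s ^ 2 = v - u ^ 2 / 4) :
    (⟨-u / 2, s⟩ : ℂ) ^ 2 + u * ⟨-u / 2, s⟩ + v = 0 := by
  have hs' : (s : ℂ) ^ 2 = v - u ^ 2 / 4 := by exact_mod_cast hs
  rw [Complex.mk_eq_add_mul_I]
  push_cast
  linear_combination (s : ℂ) ^ 2 * Complex.I_sq - hs'

theorem Real.abs_sqrt_sub_le {x t c : ℝ} (hx : 0 ≤ x) (hc : 0 < c) (hct : c ≤ t) :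
    |√x - t| ≤ |x - t ^ 2| / c := by
  rw [le_div_iff₀ hc]
  calc |√x - t| * c ≤ |√x - t| * (√x + t) := by gcongr; linarith [Real.sqrt_nonneg x]
    _ = |x - t ^ 2| := by
      rw [← abs_of_pos (by linarith [Real.sqrt_nonneg x] : 0 < √x + t), ← abs_mul]
      congr 1
      linear_combination Real.sq_sqrt hx

theorem Complex.isBigO_of_re_im {α : Type*} {l : Filter α} {f : α → ℂ} {g : α → ℝ}
    (hre : (fun x => (f x).re) =O[l] g) (him : (fun x => (f x).im) =O[l] g) : f =O[l] g :=
  .trans (.of_bound 1 (.of_forall fun x => by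
    rw [one_mul, Real.norm_of_nonneg (by positivity)]
    simpa using Complex.norm_le_abs_re_add_abs_im (f x))) (hre.norm_left.add him.norm_left)

namespace GLECubic

variable {a k : ℝ}

theorem exists_mem_Icc_cubic_eq_zero (ha : 0 ≤ a) (hk : 0 ≤ k) {γ : ℝ} (hγ : 0 ≤ γ) :
    ∃ x ∈ Icc (-a) 0, x ^ 3 + a * x ^ 2 + (γ * a + k) * x + k * a = 0 := by
  have hcont : ContinuousOn (fun x : ℝ => x ^ 3 + a * x ^ 2 + (γ * a + k) * x + k * a)
      (Icc (-a) 0) := by fun_prop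
  have hsign : (0 : ℝ) ∈ Icc ((-a) ^ 3 + a * (-a) ^ 2 + (γ * a + k) * (-a) + k * a)
      (0 ^ 3 + a * 0 ^ 2 + (γ * a + k) * 0 + k * a) :=
    ⟨by nlinarith, by positivity⟩
  exact intermediate_value_Icc (by linarith) hcont hsign

noncomputable def realRoot (a k γ : ℝ) : ℝ :=
  Classical.epsilon fun x => x ∈ Icc (-a) 0 ∧ x ^ 3 + a * x ^ 2 + (γ * a + k) * x + k * a = 0

theorem realRoot_spec (ha : 0 ≤ a) (hk : 0 ≤ k) {γ : ℝ} (hγ : 0 ≤ γ) :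
    let x := realRoot a k γ
    x ∈ Icc (-a) 0 ∧ x ^ 3 + a * x ^ 2 + (γ * a + k) * x + k * a = 0 :=
  Classical.epsilon_spec (exists_mem_Icc_cubic_eq_zero ha hk hγ)

theorem realRoot_add_eq (ha : 0 ≤ a) (hk : 0 < k) {γ : ℝ} (hγ : 0 ≤ γ) :
    realRoot a k γ + a =
      γ * (a * (a - (realRoot a k γ + a)) / ((a - (realRoot a k γ + a)) ^ 2 + k)) := by
  have hroot := (realRoot_spec ha hk.le hγ).2
  rw [mul_div_assoc', eq_div_iff (by positivity)]
  linear_combination hroot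

theorem realRoot_add_mem_Icc (ha : 0 ≤ a) (hk : 0 < k) {γ : ℝ} (hγ : 0 ≤ γ) :
    realRoot a k γ + a ∈ Icc 0 (γ * (a ^ 2 / k)) := by
  obtain ⟨⟨hl, hu⟩, hroot⟩ := realRoot_spec ha hk.le hγ
  refine ⟨by linarith, ?_⟩
  rw [mul_div_assoc', le_div_iff₀ hk]
  nlinarith [mul_nonneg hγ ha, mul_nonneg (mul_nonneg hγ ha) (neg_nonneg.2 hu),
    mul_nonneg (by linarith : 0 ≤ realRoot a k γ + a) (sq_nonneg (realRoot a k γ))]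

theorem isBigO_realRoot_add (ha : 0 ≤ a) (hk : 0 < k) :
    (fun γ => realRoot a k γ + a) =O[𝓝[>] 0] fun γ => γ := by
  refine .of_bound (a ^ 2 / k) ?_
  filter_upwards [self_mem_nhdsWithin] with γ (hγ : 0 < γ)
  obtain ⟨h0, h1⟩ := realRoot_add_mem_Icc ha hk hγ.le
  rw [Real.norm_of_nonneg h0, Real.norm_of_nonneg hγ.le]
  linarith

theorem tendsto_realRoot_add (ha : 0 ≤ a) (hk : 0 < k) :
    Tendsto (fun γ => realRoot a k γ + a) (𝓝[>] 0) (𝓝 0) :=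
  (isBigO_realRoot_add ha hk).trans_tendsto (tendsto_nhdsWithin_of_tendsto_nhds tendsto_id)

theorem isBigO_realRoot_add_sub (ha : 0 ≤ a) (hk : 0 < k) :
    (fun γ => realRoot a k γ + a - γ * (a ^ 2 / (a ^ 2 + k))) =O[𝓝[>] 0] fun γ => γ ^ 2 := by
  set h : ℝ → ℝ := fun u => a * (a - u) / ((a - u) ^ 2 + k)
  have hdiff : DifferentiableAt ℝ h 0 := by
    refine DifferentiableAt.div (by fun_prop) (by fun_prop) (by positivity)
  have hh0 : h 0 = a ^ 2 / (a ^ 2 + k) := by simp [h, sq]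
  have hsub : (fun γ => h (realRoot a k γ + a) - h 0) =O[𝓝[>] 0] fun γ => γ := by
    have := hdiff.isBigO_sub.comp_tendsto (tendsto_realRoot_add ha hk)
    simp only [Function.comp_def, sub_zero] at this
    exact this.trans (isBigO_realRoot_add ha hk)
  refine ((isBigO_refl (fun γ : ℝ => γ) _).mul hsub).congr' ?_ (.of_forall fun γ => sq γ |>.symm)
  filter_upwards [self_mem_nhdsWithin] with γ (hγ : 0 < γ)
  rw [← hh0, mul_sub]
  congr 1
  exact (realRoot_add_eq ha hk hγ.le).symm

noncomputable def radicand (a k γ : ℝ) : ℝ :=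
  k + γ * a - a * (realRoot a k γ + a) + 3 / 4 * (realRoot a k γ + a) ^ 2

noncomputable def complexRoot (a k γ : ℝ) : ℂ :=
  ⟨-(realRoot a k γ + a) / 2, √(radicand a k γ)⟩

theorem cubic_mk_eq_zero (ha : 0 ≤ a) (hk : 0 ≤ k) {γ s : ℝ} (hγ : 0 ≤ γ)
    (hs : s ^ 2 = radicand a k γ) :
    let z : ℂ := ⟨-(realRoot a k γ + a) / 2, s⟩
    z ^ 3 + a * z ^ 2 + (γ * a + k) * z + k * a = 0 := by
  intro z
  set r := realRoot a k γ
  have hr : (r : ℂ) ^ 3 + a * r ^ 2 + (γ * a + k) * r + k * a = 0 := by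
    exact_mod_cast (realRoot_spec ha hk hγ).2
  have hq : z ^ 2 + ((r + a : ℝ) : ℂ) * z + ((γ * a + k + r * (r + a) : ℝ) : ℂ) = 0 :=
    Complex.mk_sq_add_mul_add_eq_zero (by rw [hs, radicand]; ring)
  push_cast at hq
  linear_combination (z - r) * hq + hr

theorem complexRoot_cubic_eq_zero (ha : 0 ≤ a) (hk : 0 ≤ k) {γ : ℝ} (hγ : 0 ≤ γ)
    (hR : 0 ≤ radicand a k γ) :
    let z := complexRoot a k γ
    z ^ 3 + a * z ^ 2 + (γ * a + k) * z + k * a = 0 :=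
  cubic_mk_eq_zero ha hk hγ (Real.sq_sqrt hR)

theorem conj_complexRoot_cubic_eq_zero (ha : 0 ≤ a) (hk : 0 ≤ k) {γ : ℝ} (hγ : 0 ≤ γ)
    (hR : 0 ≤ radicand a k γ) :
    let z := starRingEnd ℂ (complexRoot a k γ)
    z ^ 3 + a * z ^ 2 + (γ * a + k) * z + k * a = 0 := by
  have hconj : starRingEnd ℂ (complexRoot a k γ) =
      ⟨-(realRoot a k γ + a) / 2, -√(radicand a k γ)⟩ :=
    Complex.ext (by simp [complexRoot]) (by simp [complexRoot])
  rw [hconj]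
  exact cubic_mk_eq_zero ha hk hγ (by rw [neg_sq, Real.sq_sqrt hR])

theorem tendsto_radicand (ha : 0 ≤ a) (hk : 0 < k) :
    Tendsto (radicand a k) (𝓝[>] 0) (𝓝 k) := by
  have hγ : Tendsto (fun γ : ℝ => γ) (𝓝[>] 0) (𝓝 0) :=
    tendsto_nhdsWithin_of_tendsto_nhds tendsto_id
  have he := tendsto_realRoot_add ha hk
  unfold radicand
  simpa using (((tendsto_const_nhds (x := k)).add (hγ.mul_const a)).sub (he.const_mul a)).add
    ((he.pow 2).const_mul (3 / 4))

theorem radicand_sub_sq (hk : 0 < k) (γ : ℝ) :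
    radicand a k γ - (√k * (1 + γ * a / (2 * (a ^ 2 + k)))) ^ 2 =
      -a * (realRoot a k γ + a - γ * (a ^ 2 / (a ^ 2 + k))) +
        3 / 4 * (realRoot a k γ + a) ^ 2 - k * a ^ 2 / (4 * (a ^ 2 + k) ^ 2) * γ ^ 2 := by
  rw [mul_pow, Real.sq_sqrt hk.le, radicand]
  field_simp
  ring

theorem isBigO_sqrt_radicand_sub (ha : 0 ≤ a) (hk : 0 < k) :
    (fun γ => √(radicand a k γ) - √k * (1 + γ * a / (2 * (a ^ 2 + k)))) =O[𝓝[>] 0]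
      fun γ => γ ^ 2 := by
  have hdiff : (fun γ => radicand a k γ - (√k * (1 + γ * a / (2 * (a ^ 2 + k)))) ^ 2) =O[𝓝[>] 0]
      fun γ => γ ^ 2 := by
    simp only [radicand_sub_sq hk]
    exact (((isBigO_realRoot_add_sub ha hk).const_mul_left (-a)).add
      (((isBigO_realRoot_add ha hk).pow 2).const_mul_left (3 / 4))).sub
      ((isBigO_refl _ _).const_mul_left _)
  refine IsBigO.trans (.of_bound (1 / √k) ?_) hdiff
  filter_upwards [self_mem_nhdsWithin, (tendsto_radicand ha hk).eventually (lt_mem_nhds hk)]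
    with γ (hγ : 0 < γ) hR
  have hsqrt : 0 < √k := Real.sqrt_pos.2 hk
  rw [Real.norm_eq_abs, Real.norm_eq_abs, one_div_mul_eq_div]
  refine Real.abs_sqrt_sub_le hR.le hsqrt (le_mul_of_one_le_right hsqrt.le ?_)
  have : 0 ≤ γ * a / (2 * (a ^ 2 + k)) := by positivity
  linarith

theorem isBigO_complexRoot_sub (ha : 0 ≤ a) (hk : 0 < k) :
    (fun γ => complexRoot a k γ -
        ⟨-(γ * (a ^ 2 / (a ^ 2 + k))) / 2, √k * (1 + γ * a / (2 * (a ^ 2 + k)))⟩) =O[𝓝[>] 0]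
      fun γ => γ ^ 2 := by
  refine Complex.isBigO_of_re_im ?_ ?_
  · refine ((isBigO_realRoot_add_sub ha hk).const_mul_left (-1 / 2)).congr_left fun γ => ?_
    simp only [Complex.sub_re, complexRoot]
    ring
  · exact isBigO_sqrt_radicand_sub ha hk

theorem expansion_eq_mk {ν : ℝ} (hν : ν ≠ 0) (hk : 0 ≤ k) (γ : ℝ) :
    Complex.I * (√k : ℂ) - (γ : ℂ) * (1 - Complex.I * (√k : ℂ) * (ν : ℂ) ^ 2) /
        (2 * (1 + (k : ℂ) * (ν : ℂ) ^ 4)) =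
      ⟨-(γ * ((ν ^ 2)⁻¹ ^ 2 / ((ν ^ 2)⁻¹ ^ 2 + k))) / 2,
        √k * (1 + γ * (ν ^ 2)⁻¹ / (2 * ((ν ^ 2)⁻¹ ^ 2 + k)))⟩ := by
  have hden : ((1 + k * ν ^ 4 : ℝ) : ℂ) ≠ 0 :=
    Complex.ofReal_ne_zero.2 (by positivity)
  have hν' : (ν : ℂ) ≠ 0 := Complex.ofReal_ne_zero.2 hν
  rw [Complex.mk_eq_add_mul_I]
  push_cast at hden ⊢
  field_simp
  ring

end GLECubic

open GLECubic

/-- Asymptotics of the roots of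
`p(x) = x³ + ν⁻²x² + (γν⁻² + k)x + kν⁻²` as `γ → 0⁺`: the real root satisfies
`x₁(γ) = -ν⁻² + O(γ)` and the complex conjugate pair satisfies
`x₂(γ) = i√k - γ(1 - i√k ν²)/(2(1+kν⁴)) + O(γ²)`. -/
theorem gle_roots_gamma_to_zero (k ν : ℝ) (hk : 0 < k) (hν : 0 < ν) :
    ∃ (x₁ : ℝ → ℝ) (x₂ : ℝ → ℂ) (γ₀ : ℝ), 0 < γ₀ ∧
      (∀ γ, 0 < γ → γ < γ₀ →
        x₁ γ ^ 3 + (ν ^ 2)⁻¹ * x₁ γ ^ 2 + (γ * (ν ^ 2)⁻¹ + k) * x₁ γ + k * (ν ^ 2)⁻¹ = 0 ∧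
        x₂ γ ^ 3 + ((ν : ℂ) ^ 2)⁻¹ * x₂ γ ^ 2 +
            ((γ : ℂ) * ((ν : ℂ) ^ 2)⁻¹ + (k : ℂ)) * x₂ γ + (k : ℂ) * ((ν : ℂ) ^ 2)⁻¹ = 0 ∧
        (x₂ γ).im ≠ 0 ∧
        (starRingEnd ℂ) (x₂ γ) ^ 3 + ((ν : ℂ) ^ 2)⁻¹ * (starRingEnd ℂ) (x₂ γ) ^ 2 +
            ((γ : ℂ) * ((ν : ℂ) ^ 2)⁻¹ + (k : ℂ)) * (starRingEnd ℂ) (x₂ γ) +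
            (k : ℂ) * ((ν : ℂ) ^ 2)⁻¹ = 0) ∧
      ((fun γ => x₁ γ + (ν ^ 2)⁻¹) =O[nhdsWithin 0 (Set.Ioi 0)] fun γ => γ) ∧
      ((fun γ => x₂ γ -
          (Complex.I * (Real.sqrt k : ℂ) -
            (γ : ℂ) * (1 - Complex.I * (Real.sqrt k : ℂ) * (ν : ℂ) ^ 2) /
              (2 * (1 + (k : ℂ) * (ν : ℂ) ^ 4))))
        =O[nhdsWithin 0 (Set.Ioi 0)] fun γ => γ ^ 2) := by
  have ha : 0 ≤ (ν ^ 2)⁻¹ := by positivity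
  obtain ⟨γ₀, hγ₀, hR⟩ := mem_nhdsGT_iff_exists_Ioo_subset.1
    ((tendsto_radicand ha hk).eventually (lt_mem_nhds hk))
  have hcast : ((ν : ℂ) ^ 2)⁻¹ = (((ν ^ 2)⁻¹ : ℝ) : ℂ) := by push_cast; rfl
  refine ⟨realRoot (ν ^ 2)⁻¹ k, complexRoot (ν ^ 2)⁻¹ k, γ₀, hγ₀, fun γ hγ hγ₀ => ?_,
    isBigO_realRoot_add ha hk, ?_⟩
  · have hRγ : 0 < radicand (ν ^ 2)⁻¹ k γ := hR ⟨hγ, hγ₀⟩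
    rw [hcast]
    exact ⟨(realRoot_spec ha hk.le hγ.le).2, complexRoot_cubic_eq_zero ha hk.le hγ.le hRγ.le,
      (Real.sqrt_pos.2 hRγ).ne', conj_complexRoot_cubic_eq_zero ha hk.le hγ.le hRγ.le⟩
  · simp only [expansion_eq_mk hν.ne' hk.le]
    exact isBigO_complexRoot_sub ha hk
end
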